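/- For any β₁,…,β_J ∈ ℝ and positive weights w₁,…,w_J, the function α ↦ Σ_{j=1}^J w_j Var_{g_α}([φ_j(X)f_j(X) − β_j g_{λ_j}(X)]/g_α(X)), with g_α = Σ_j α_j g_{λ_j}, is convex on the simplex S_J. -/

import Mathlib

/-
For α in the simplex, g_α := Σ_i α_i g_{λ_i} is a probability density, and since ψ_j := φ_j f_j − β_j g_{λ_j}
vanishes wherever g_α does, Var_{g_α}(ψ_j / g_α) = ∫ ψ_j² / g_α dμ − (∫ ψ_j dμ)², whose second term does not
depend on α. The integrand ψ_j(x)² / g_α(x) is convex in α, being y ↦ c² / y on y > 0 composed with the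
linear map α ↦ g_α(x), and convexity survives integration and positive linear combinations.
-/

open MeasureTheory ProbabilityTheory Set

/-- The measure with density `g` with respect to `μ`. -/
noncomputable def den {E : Type*} [MeasurableSpace E] (μ : Measure E) (g : E → ℝ) :
    Measure E :=
  μ.withDensity (fun x => ENNReal.ofReal (g x))

section Convexity

theorem convexOn_finsetSum {𝕜 E β ι : Type*} [Semiring 𝕜] [PartialOrder 𝕜] [AddCommMonoid E]
    [AddCommMonoid β] [PartialOrder β] [IsOrderedAddMonoid β] [SMul 𝕜 E] [Module 𝕜 β]
    {s : Set E} (hs : Convex 𝕜 s) {t : Finset ι} {f : ι → E → β}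
    (hf : ∀ i ∈ t, ConvexOn 𝕜 s (f i)) : ConvexOn 𝕜 s (fun x => ∑ i ∈ t, f i x) := by
  classical
  induction t using Finset.induction_on with
  | empty => simpa using convexOn_const 0 hs
  | insert a t ha ih =>
    simp_rw [Finset.sum_insert ha]
    exact (hf a (Finset.mem_insert_self a t)).add
      (ih fun i hi => hf i (Finset.mem_insert_of_mem hi))

theorem convexOn_integral {P E : Type*} [AddCommMonoid P] [Module ℝ P] [MeasurableSpace E]
    {μ : Measure E} {s : Set P} (hs : Convex ℝ s) {F : P → E → ℝ}
    (hF : ∀ᵐ x ∂μ, ConvexOn ℝ s (F · x)) (hint : ∀ p ∈ s, Integrable (F p) μ) :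
    ConvexOn ℝ s (fun p => ∫ x, F p x ∂μ) := by
  refine ⟨hs, fun p hp q hq a b ha hb hab => ?_⟩
  have hp' : Integrable (fun x => a • F p x) μ := (hint p hp).smul a
  have hq' : Integrable (fun x => b • F q x) μ := (hint q hq).smul b
  calc ∫ x, F (a • p + b • q) x ∂μ ≤ ∫ x, a • F p x + b • F q x ∂μ :=
        integral_mono_ae (hint _ (hs hp hq ha hb hab)) (hp'.add hq')
          (hF.mono fun x hx => hx.2 hp hq ha hb hab)
    _ = a • ∫ x, F p x ∂μ + b • ∫ x, F q x ∂μ := by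
        rw [integral_add hp' hq', integral_smul, integral_smul]

theorem sum_mul_pos_of_mem_stdSimplex {ι : Type*} [Fintype ι] {α v : ι → ℝ}
    (hα : α ∈ stdSimplex ℝ ι) (hv : ∀ i, 0 < v i) : 0 < ∑ i, α i * v i := by
  obtain ⟨i, -, hi⟩ := Finset.exists_lt_of_sum_lt (f := 0) (g := α) (s := .univ) (by simp [hα.2])
  exact Finset.sum_pos' (fun j _ => mul_nonneg (hα.1 j) (hv j).le)
    ⟨i, Finset.mem_univ i, mul_pos hi (hv i)⟩

theorem convexOn_sq_div_sum_mul {ι : Type*} [Fintype ι] (c : ℝ) {v : ι → ℝ}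
    (hv : ∀ i, 0 ≤ v i) (hc : ∀ i, v i = 0 → c = 0) :
    ConvexOn ℝ (stdSimplex ℝ ι) (fun α => c ^ 2 / ∑ i, α i * v i) := by
  rcases eq_or_ne c 0 with rfl | hc0
  · simpa using convexOn_const 0 (convex_stdSimplex ℝ ι)
  have hv_pos : ∀ i, 0 < v i := fun i => (hv i).lt_of_ne' fun h => hc0 (hc i h)
  have hdiv : ConvexOn ℝ (Ioi 0) fun y : ℝ => c ^ 2 / y := by
    simpa [div_eq_mul_inv] using (convexOn_zpow (-1)).smul (sq_nonneg c)
  refine ((hdiv.comp_linearMap (Fintype.linearCombination ℝ v)).subset (fun α hα => ?_)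
    (convex_stdSimplex ℝ ι)).congr fun α _ => ?_
  · simpa [Fintype.linearCombination_apply, mul_comm] using
      sum_mul_pos_of_mem_stdSimplex hα hv_pos
  · simp [Fintype.linearCombination_apply, mul_comm]

end Convexity

section Density

variable {E : Type*} [MeasurableSpace E] {μ : Measure E} {g ψ : E → ℝ}

theorem integral_den (hg : AEMeasurable g μ) (hg0 : ∀ x, 0 ≤ g x) (f : E → ℝ) :
    ∫ x, f x ∂den μ g = ∫ x, g x * f x ∂μ := by
  rw [den, integral_withDensity_eq_integral_toReal_smul₀ hg.ennreal_ofReal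
    (ae_of_all _ fun _ => ENNReal.ofReal_lt_top)]
  simp only [ENNReal.toReal_ofReal (hg0 _), smul_eq_mul]

theorem integrable_den_iff (hg : AEMeasurable g μ) (hg0 : ∀ x, 0 ≤ g x) {f : E → ℝ} :
    Integrable f (den μ g) ↔ Integrable (fun x => g x * f x) μ := by
  rw [den, integrable_withDensity_iff_integrable_smul₀' hg.ennreal_ofReal
    (ae_of_all _ fun _ => ENNReal.ofReal_lt_top)]
  simp only [ENNReal.toReal_ofReal (hg0 _), smul_eq_mul]

theorem isProbabilityMeasure_den (hg0 : ∀ x, 0 ≤ g x) (hg1 : ∫ x, g x ∂μ = 1) :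
    IsProbabilityMeasure (den μ g) := by
  constructor
  rw [den, withDensity_apply _ MeasurableSet.univ, Measure.restrict_univ,
    ← ofReal_integral_eq_lintegral_ofReal (integrable_of_integral_eq_one hg1) (ae_of_all _ hg0),
    hg1, ENNReal.ofReal_one]

theorem mul_div_sq_eq (a b : ℝ) : a * (b / a) ^ 2 = b ^ 2 / a := by
  field_simp

theorem integrable_sq_div_of_memLp_den (hg : AEMeasurable g μ) (hg0 : ∀ x, 0 ≤ g x)
    (hL2 : MemLp (fun x => ψ x / g x) 2 (den μ g)) :
    Integrable (fun x => ψ x ^ 2 / g x) μ := by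
  simpa only [mul_div_sq_eq] using (integrable_den_iff hg hg0).1 hL2.integrable_sq

theorem variance_div_den [IsProbabilityMeasure (den μ g)] (hg : AEMeasurable g μ)
    (hg0 : ∀ x, 0 ≤ g x) (hψ : ∀ x, g x = 0 → ψ x = 0)
    (hL2 : MemLp (fun x => ψ x / g x) 2 (den μ g)) :
    variance (fun x => ψ x / g x) (den μ g) = ∫ x, ψ x ^ 2 / g x ∂μ - (∫ x, ψ x ∂μ) ^ 2 := by
  have hmean : ∀ x, g x * (ψ x / g x) = ψ x := fun x => by
    rcases eq_or_ne (g x) 0 with h | h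
    · simp [h, hψ x h]
    · field_simp
  rw [variance_eq_sub hL2]
  simp only [Pi.pow_apply, integral_den hg hg0, hmean, mul_div_sq_eq]

end Density

theorem weighted_sum_variance_convex_general
    {E : Type*} [MeasurableSpace E] (μ : Measure E)
    (J : ℕ) (fs φs : Fin J → E → ℝ) (gl : Fin J → E → ℝ)
    (β : Fin J → ℝ) (w : Fin J → ℝ)
    (hgl0 : ∀ j x, 0 ≤ gl j x) (hgl1 : ∀ j, ∫ x, gl j x ∂μ = 1)
    (hw : ∀ j, 0 < w j)
    (hsupp : ∀ i j x, gl i x = 0 → φs j x * fs j x - β j * gl j x = 0)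
    (hL2 : ∀ α ∈ stdSimplex ℝ (Fin J), ∀ j,
      MemLp (fun x => (φs j x * fs j x - β j * gl j x) / ∑ i, α i * gl i x) 2
        (den μ (fun x => ∑ i, α i * gl i x))) :
    ConvexOn ℝ (stdSimplex ℝ (Fin J))
      (fun α => ∑ j, w j *
        variance (fun x => (φs j x * fs j x - β j * gl j x) / ∑ i, α i * gl i x)
          (den μ (fun x => ∑ i, α i * gl i x))) := by
  have hgl : ∀ i, Integrable (gl i) μ := fun i => integrable_of_integral_eq_one (hgl1 i)
  have hg_meas : ∀ α : Fin J → ℝ, AEMeasurable (fun x => ∑ i, α i * gl i x) μ := fun α =>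
    (integrable_finsetSum _ fun i _ => (hgl i).const_mul (α i)).aemeasurable
  have hg0 : ∀ α ∈ stdSimplex ℝ (Fin J), ∀ x, 0 ≤ ∑ i, α i * gl i x := fun α hα x =>
    Finset.sum_nonneg fun i _ => mul_nonneg (hα.1 i) (hgl0 i x)
  have hg1 : ∀ α ∈ stdSimplex ℝ (Fin J), ∫ x, ∑ i, α i * gl i x ∂μ = 1 := fun α hα => by
    simp [integral_finsetSum _ fun i _ => (hgl i).const_mul (α i), integral_const_mul, hgl1, hα.2]
  have hψ : ∀ α ∈ stdSimplex ℝ (Fin J), ∀ j x, ∑ i, α i * gl i x = 0 →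
      φs j x * fs j x - β j * gl j x = 0 := fun α hα j x hx => by
    by_contra hne
    exact (sum_mul_pos_of_mem_stdSimplex hα fun i =>
      (hgl0 i x).lt_of_ne' fun h => hne (hsupp i j x h)).ne' hx
  have hvar : ∀ α ∈ stdSimplex ℝ (Fin J), ∀ j,
      variance (fun x => (φs j x * fs j x - β j * gl j x) / ∑ i, α i * gl i x)
        (den μ (fun x => ∑ i, α i * gl i x)) =
      ∫ x, (φs j x * fs j x - β j * gl j x) ^ 2 / ∑ i, α i * gl i x ∂μ
        - (∫ x, φs j x * fs j x - β j * gl j x ∂μ) ^ 2 := fun α hα j =>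
    have := isProbabilityMeasure_den (hg0 α hα) (hg1 α hα)
    variance_div_den (hg_meas α) (hg0 α hα) (hψ α hα j) (hL2 α hα j)
  have hconv : ∀ j, ConvexOn ℝ (stdSimplex ℝ (Fin J)) fun α =>
      variance (fun x => (φs j x * fs j x - β j * gl j x) / ∑ i, α i * gl i x)
        (den μ (fun x => ∑ i, α i * gl i x)) := fun j =>
    ((convexOn_integral (convex_stdSimplex ℝ _)
      (ae_of_all _ fun x => convexOn_sq_div_sum_mul _ (hgl0 · x) fun i => hsupp i j x)
      fun α hα => integrable_sq_div_of_memLp_den (hg_meas α) (hg0 α hα) (hL2 α hα j)).add_const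
        (-(∫ x, φs j x * fs j x - β j * gl j x ∂μ) ^ 2)).congr fun α hα =>
      ((hvar α hα j).trans (sub_eq_add_neg _ _)).symm
  exact convexOn_finsetSum (convex_stdSimplex ℝ _) fun j _ => (hconv j).smul (hw j).le

/-- For any control parameters `β_j` and positive weights `w_j`, the map
`α ↦ Σ_j w_j Var_{g_α}([φ_j f_j − β_j g_{λ_j}]/g_α)` (with `g_α = Σ_j α_j g_{λ_j}`)
is convex on the simplex `S_J`. -/
theorem weighted_sum_variance_convex
    {E : Type*} [MeasurableSpace E] (μ : Measure E)
    (J : ℕ) (fs φs : Fin J → E → ℝ) (gl : Fin J → E → ℝ)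
    (β : Fin J → ℝ) (w : Fin J → ℝ)
    (hfs0 : ∀ j x, 0 ≤ fs j x) (hfs1 : ∀ j, ∫ x, fs j x ∂μ = 1)
    (hφs0 : ∀ j x, 0 ≤ φs j x)
    (hgl0 : ∀ j x, 0 ≤ gl j x) (hgl1 : ∀ j, ∫ x, gl j x ∂μ = 1)
    (hw : ∀ j, 0 < w j)
    (hsupp : ∀ i j x, gl i x = 0 → φs j x * fs j x - β j * gl j x = 0)
    (hL2 : ∀ α ∈ stdSimplex ℝ (Fin J), ∀ j,
      MemLp (fun x => (φs j x * fs j x - β j * gl j x) / ∑ i, α i * gl i x) 2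
        (den μ (fun x => ∑ i, α i * gl i x))) :
    ConvexOn ℝ (stdSimplex ℝ (Fin J))
      (fun α => ∑ j, w j *
        variance (fun x => (φs j x * fs j x - β j * gl j x) / ∑ i, α i * gl i x)
          (den μ (fun x => ∑ i, α i * gl i x))) :=
  weighted_sum_variance_convex_general μ J fs φs gl β w hgl0 hgl1 hw hsupp hL2
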